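/- arXiv:2512.12750 — 2 statements merged into one kernel-verified Lean document; each statement's English description precedes it below -/
import Mathlib

section
/- Let w : [0,∞) → [0,1] be non-increasing and right-continuous, κ ∈ ℝ, η ∈ (0,n), and x₁,...,xₙ ∈ ℝ. Define α̂ := inf{α > 0 : ∑ᵢ w(α|xᵢ-κ|) ≤ n-η}, assumed positive and finite. Suppose that α̂ is a discontinuity point of α ↦ w(α|xᵢ - κ|) for at most one index i ∈ {1,...,n}. Then ∑_{i=1}^n w(α̂|xᵢ - κ|) ≥ n - η - 1. -/
open Finset Filter Topology

/-!
Below `α̂` every sum exceeds `n - η`, by definition of the infimum. The summands that are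
continuous at `α̂` pass to the limit `α ↑ α̂`, and the at most one remaining summand takes
values in `[0, 1]`, so it costs at most `1` in the limit.
-/

theorem sub_one_le_sum_of_subsingleton_discontinuous {ι : Type*} [Fintype ι]
    {f : ι → ℝ → ℝ} {a c : ℝ} {l : Filter ℝ} [l.NeBot] (hl : l ≤ 𝓝 a)
    (hle_one : ∀ i, ∀ᶠ t in l, f i t ≤ 1) (hnonneg : ∀ i, 0 ≤ f i a)
    (hdisc : {i | ¬ ContinuousAt (f i) a}.Subsingleton)
    (hsum : ∀ᶠ t in l, c ≤ ∑ i, f i t) :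
    c - 1 ≤ ∑ i, f i a := by
  classical
  set C := univ.filter fun i => ContinuousAt (f i) a
  set D := univ.filter fun i => ¬ ContinuousAt (f i) a
  have hD : #D ≤ 1 := card_le_one.2 fun i hi j hj => hdisc (mem_filter.1 hi).2 (mem_filter.1 hj).2
  have hsplit (t : ℝ) : ∑ i, f i t = ∑ i ∈ C, f i t + ∑ i ∈ D, f i t :=
    (sum_filter_add_sum_filter_not univ _ _).symm
  have hlim : Tendsto (fun t => ∑ i ∈ C, f i t) l (𝓝 (∑ i ∈ C, f i a)) :=
    tendsto_finsetSum _ fun i hi => ((mem_filter.1 hi).2.tendsto).mono_left hl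
  have hC : ∀ᶠ t in l, c - 1 ≤ ∑ i ∈ C, f i t := by
    filter_upwards [hsum, eventually_all.2 hle_one] with t ht hf
    have : ∑ i ∈ D, f i t ≤ 1 :=
      calc ∑ i ∈ D, f i t ≤ #D • (1 : ℝ) := sum_le_card_nsmul _ _ _ fun i _ => hf i
        _ ≤ 1 := by simpa using (Nat.cast_le (α := ℝ)).2 hD
    linarith [hsplit t]
  calc c - 1 ≤ ∑ i ∈ C, f i a := ge_of_tendsto hlim hC
    _ ≤ ∑ i, f i a := sum_le_sum_of_subset_of_nonneg (subset_univ C) fun i _ _ => hnonneg i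

theorem sum_weights_at_alphaHat_ge_general (n : ℕ) (w : ℝ → ℝ)
    (hw : ∀ t, 0 ≤ t → w t ∈ Set.Icc (0:ℝ) 1)
    (κ η : ℝ) (x : Fin n → ℝ)
    (αhat : ℝ)
    (hαhat : αhat = sInf {α : ℝ | 0 < α ∧ ∑ i, w (α * |x i - κ|) ≤ (n : ℝ) - η})
    (hpos : 0 < αhat)
    (hdisc : {i : Fin n | ¬ ContinuousAt (fun α : ℝ => w (α * |x i - κ|)) αhat}.Subsingleton) :
    (n : ℝ) - η - 1 ≤ ∑ i, w (αhat * |x i - κ|) := by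
  have hweight {α : ℝ} (hα : 0 ≤ α) (i : Fin n) : w (α * |x i - κ|) ∈ Set.Icc (0:ℝ) 1 :=
    hw _ (mul_nonneg hα (abs_nonneg _))
  have hbelow : ∀ᶠ α in 𝓝[<] αhat, 0 < α ∧ α < αhat :=
    ((eventually_gt_nhds hpos).filter_mono nhdsWithin_le_nhds).and self_mem_nhdsWithin
  have hsum_below : ∀ᶠ α in 𝓝[<] αhat, (n : ℝ) - η ≤ ∑ i, w (α * |x i - κ|) := by
    filter_upwards [hbelow] with α ⟨hα, hlt⟩
    by_contra! hle
    rw [hαhat] at hlt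
    exact notMem_of_lt_csInf hlt ⟨0, fun β hβ => hβ.1.le⟩ ⟨hα, hle.le⟩
  refine sub_one_le_sum_of_subsingleton_discontinuous nhdsWithin_le_nhds (fun i => ?_)
    (fun i => (hweight hpos.le i).1) hdisc hsum_below
  filter_upwards [hbelow] with α ⟨hα, _⟩
  exact (hweight hα.le i).2

/-- Lower bound `∑ᵢ w(α̂|xᵢ-κ|) ≥ n - η - 1` when `α̂` is a discontinuity of
`α ↦ w(α|xᵢ-κ|)` for at most one index. -/
theorem sum_weights_at_alphaHat_ge (n : ℕ) (w : ℝ → ℝ)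
    (hw : ∀ t, 0 ≤ t → w t ∈ Set.Icc (0:ℝ) 1) (hmono : AntitoneOn w (Set.Ici 0))
    (hrc : ∀ t, 0 ≤ t → ContinuousWithinAt w (Set.Ici t) t)
    (κ η : ℝ) (hη : 0 < η) (hηn : η < n) (x : Fin n → ℝ)
    (αhat : ℝ)
    (hαhat : αhat = sInf {α : ℝ | 0 < α ∧ ∑ i, w (α * |x i - κ|) ≤ (n : ℝ) - η})
    (hpos : 0 < αhat)
    (hdisc : {i : Fin n | ¬ ContinuousAt (fun α : ℝ => w (α * |x i - κ|)) αhat}.Subsingleton) :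
    (n : ℝ) - η - 1 ≤ ∑ i, w (αhat * |x i - κ|) :=
  sum_weights_at_alphaHat_ge_general n w hw κ η x αhat hαhat hpos hdisc
end

section
/- Let w : [0,∞) → [0,1], κ ∈ ℝ, α, α' > 0, and x₁,...,xₙ, y₁,...,yₙ ∈ ℝ with xᵢ ≠ yᵢ for at most ⌊nε⌋ indices, ε ∈ [0,1]. Define m(β) = sup_{x∈ℝ} |x| w(β|x|) and assume m(α), m(α') < ∞. Then |(1/n)∑ᵢ (xᵢ - κ) w(α|xᵢ - κ|) - (1/n)∑ᵢ (yᵢ - κ) w(α'|yᵢ - κ|)| ≤ (ε + (2n - ∑ᵢ w(α'|yᵢ-κ|) - ∑ᵢ w(α|xᵢ-κ|))/n) · (m(α) + m(α')). -/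
/-!
Write `aᵢ = w(α|xᵢ - κ|)`, `bᵢ = w(α'|yᵢ - κ|)`. Where `xᵢ ≠ yᵢ` the two summands are bounded by
`m(α)` and `m(α')`, which costs at most `⌊nε⌋ (m(α) + m(α'))` in total. Where `xᵢ = yᵢ = z` the
difference is `(z - κ)(aᵢ - bᵢ)`, and `|aᵢ - bᵢ| ≤ aᵢ(1 - bᵢ) + bᵢ(1 - aᵢ)` turns it into
`m(α)(1 - bᵢ) + m(α')(1 - aᵢ)`: the weights pay for the change of tuning constant.
-/

open Finset

lemma abs_sub_le_mul_one_sub_add_mul_one_sub {a b : ℝ} (ha : a ∈ Set.Icc (0 : ℝ) 1)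
    (hb : b ∈ Set.Icc (0 : ℝ) 1) : |a - b| ≤ a * (1 - b) + b * (1 - a) := by
  obtain ⟨ha₀, ha₁⟩ := ha
  obtain ⟨hb₀, hb₁⟩ := hb
  rw [abs_sub_le_iff]
  constructor <;> nlinarith

lemma abs_mul_sub_mul_le_add {u v a b M M' : ℝ} (ha : 0 ≤ a) (hb : 0 ≤ b)
    (hM : |u| * a ≤ M) (hM' : |v| * b ≤ M') : |u * a - v * b| ≤ M + M' :=
  calc |u * a - v * b| ≤ |u * a| + |v * b| := abs_sub _ _
    _ = |u| * a + |v| * b := by rw [abs_mul, abs_mul, abs_of_nonneg ha, abs_of_nonneg hb]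
    _ ≤ M + M' := add_le_add hM hM'

lemma abs_mul_sub_mul_left_le {z a b M M' : ℝ} (ha : a ∈ Set.Icc (0 : ℝ) 1)
    (hb : b ∈ Set.Icc (0 : ℝ) 1) (hM : |z| * a ≤ M) (hM' : |z| * b ≤ M') :
    |z * a - z * b| ≤ M * (1 - b) + M' * (1 - a) :=
  calc |z * a - z * b| = |z| * |a - b| := by rw [← mul_sub, abs_mul]
    _ ≤ |z| * (a * (1 - b) + b * (1 - a)) :=
      mul_le_mul_of_nonneg_left (abs_sub_le_mul_one_sub_add_mul_one_sub ha hb) (abs_nonneg z)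
    _ = |z| * a * (1 - b) + |z| * b * (1 - a) := by ring
    _ ≤ M * (1 - b) + M' * (1 - a) := by
      gcongr
      · linarith [hb.2]
      · linarith [ha.2]

lemma abs_mul_sub_mul_le_of_eq {u v a b M M' : ℝ} (huv : u = v)
    (ha : a ∈ Set.Icc (0 : ℝ) 1) (hb : b ∈ Set.Icc (0 : ℝ) 1)
    (hM : |u| * a ≤ M) (hM' : |v| * b ≤ M') :
    |u * a - v * b| ≤ (M + M') * ((1 - a) + (1 - b)) := by
  subst huv
  have hM₀ : 0 ≤ M := (mul_nonneg (abs_nonneg u) ha.1).trans hM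
  have hM'₀ : 0 ≤ M' := (mul_nonneg (abs_nonneg u) hb.1).trans hM'
  have := abs_mul_sub_mul_left_le ha hb hM hM'
  nlinarith [ha.2, hb.2]

lemma abs_mul_sub_mul_le_of_mem_Icc {u v a b M M' : ℝ}
    (ha : a ∈ Set.Icc (0 : ℝ) 1) (hb : b ∈ Set.Icc (0 : ℝ) 1)
    (hM : |u| * a ≤ M) (hM' : |v| * b ≤ M') :
    |u * a - v * b| ≤ (M + M') * (1 + (1 - a) + (1 - b)) := by
  have hM₀ : 0 ≤ M := (mul_nonneg (abs_nonneg u) ha.1).trans hM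
  have hM'₀ : 0 ≤ M' := (mul_nonneg (abs_nonneg v) hb.1).trans hM'
  have := abs_mul_sub_mul_le_add ha.1 hb.1 hM hM'
  nlinarith [ha.2, hb.2]

lemma abs_sum_mul_sub_sum_mul_le {ι : Type*} [Fintype ι] (s : Finset ι) (u v a b : ι → ℝ)
    (M M' : ℝ) (hs : ∀ i ∉ s, u i = v i) (ha : ∀ i, a i ∈ Set.Icc (0 : ℝ) 1)
    (hb : ∀ i, b i ∈ Set.Icc (0 : ℝ) 1) (hM : ∀ i, |u i| * a i ≤ M)
    (hM' : ∀ i, |v i| * b i ≤ M') :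
    |∑ i, u i * a i - ∑ i, v i * b i|
      ≤ (M + M') * (#s + (Fintype.card ι - ∑ i, a i) + (Fintype.card ι - ∑ i, b i)) := by
  classical
  have hterm : ∀ i, |u i * a i - v i * b i|
      ≤ (M + M') * ((if i ∈ s then 1 else 0) + (1 - a i) + (1 - b i)) := by
    intro i
    by_cases hi : i ∈ s
    · simpa [hi] using abs_mul_sub_mul_le_of_mem_Icc (ha i) (hb i) (hM i) (hM' i)
    · simpa [hi] using abs_mul_sub_mul_le_of_eq (hs i hi) (ha i) (hb i) (hM i) (hM' i)
  calc |∑ i, u i * a i - ∑ i, v i * b i| = |∑ i, (u i * a i - v i * b i)| := by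
        rw [sum_sub_distrib]
    _ ≤ ∑ i, |u i * a i - v i * b i| := abs_sum_le_sum_abs _ _
    _ ≤ ∑ i, (M + M') * ((if i ∈ s then 1 else 0) + (1 - a i) + (1 - b i)) :=
        sum_le_sum fun i _ => hterm i
    _ = (M + M') * (#s + (Fintype.card ι - ∑ i, a i) + (Fintype.card ι - ∑ i, b i)) := by
        simp [← mul_sum, sum_add_distrib, sum_sub_distrib]

/-- Deterministic contamination-error bound (Lemma 3.6). -/
theorem contamination_error_bound (n : ℕ) (hn : 0 < n) (w : ℝ → ℝ)
    (hw : ∀ t, 0 ≤ t → w t ∈ Set.Icc (0:ℝ) 1)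
    (κ α α' : ℝ) (hα : 0 < α) (hα' : 0 < α') (ε : ℝ) (hε : ε ∈ Set.Icc (0:ℝ) 1)
    (x y : Fin n → ℝ)
    (hdiff : (Finset.univ.filter fun i => x i ≠ y i).card ≤ Nat.floor ((n : ℝ) * ε))
    (Mα Mα' : ℝ)
    (hMα : IsLUB {s : ℝ | ∃ z : ℝ, s = |z| * w (α * |z|)} Mα)
    (hMα' : IsLUB {s : ℝ | ∃ z : ℝ, s = |z| * w (α' * |z|)} Mα') :
    |(1 / n : ℝ) * ∑ i, (x i - κ) * w (α * |x i - κ|)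
        - (1 / n : ℝ) * ∑ i, (y i - κ) * w (α' * |y i - κ|)|
      ≤ (ε + (2 * n - ∑ i, w (α' * |y i - κ|) - ∑ i, w (α * |x i - κ|)) / n)
          * (Mα + Mα') := by
  have hsum := abs_sum_mul_sub_sum_mul_le (univ.filter fun i => x i ≠ y i)
    (fun i => x i - κ) (fun i => y i - κ) (fun i => w (α * |x i - κ|))
    (fun i => w (α' * |y i - κ|)) Mα Mα'
    (fun i hi => by simpa using hi) (fun i => hw _ (by positivity)) (fun i => hw _ (by positivity))
    (fun i => hMα.1 ⟨_, rfl⟩) (fun i => hMα'.1 ⟨_, rfl⟩)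
  have hM₀ : 0 ≤ Mα + Mα' := by simpa using add_le_add (hMα.1 ⟨0, rfl⟩) (hMα'.1 ⟨0, rfl⟩)
  have hcard : ((univ.filter fun i => x i ≠ y i).card : ℝ) ≤ n * ε :=
    (Nat.cast_le.mpr hdiff).trans (Nat.floor_le (mul_nonneg n.cast_nonneg hε.1))
  have hn' : (0 : ℝ) < n := Nat.cast_pos.mpr hn
  rw [Fintype.card_fin] at hsum
  set A := ∑ i, w (α * |x i - κ|)
  set B := ∑ i, w (α' * |y i - κ|)
  rw [← mul_sub, abs_mul, abs_of_pos (by positivity)]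
  calc _ ≤ 1 / n * ((Mα + Mα') * (n * ε + (n - A) + (n - B))) := by
        gcongr
        exact hsum.trans (by gcongr)
    _ = (ε + (2 * n - B - A) / n) * (Mα + Mα') := by
        field_simp
        ring
end
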